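/- The MFG structure is preserved in the logarithmic case (compatibility condition ∇_P H̄ = b̄): let (u, m, H̄) be a classical solution of the logarithmic ergodic MFG system, let i ∈ {1,…,n}, and let (ũ, m̃, c) be a classical solution of the associated linearized system in direction e_i. Then c = ∫_Q (∇u+P)·e_i m dy = b̄·e_i, where b̄ = ∫_Q (∇u+P) m dy is the effective drift. -/

import Mathlib

open MeasureTheory Real

/-- Partial derivative in direction `i`. -/
noncomputable def pd {n : ℕ} (i : Fin n) (f : (Fin n → ℝ) → ℝ) (x : Fin n → ℝ) : ℝ :=
  fderiv ℝ f x (Pi.single i 1)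

/-- Laplacian: sum of second partial derivatives. -/
noncomputable def lap {n : ℕ} (f : (Fin n → ℝ) → ℝ) (x : Fin n → ℝ) : ℝ :=
  ∑ i, pd i (pd i f) x

/-- Divergence of a vector field. -/
noncomputable def dvg {n : ℕ} (F : (Fin n → ℝ) → Fin n → ℝ) (x : Fin n → ℝ) : ℝ :=
  ∑ i, pd i (fun y => F y i) x

/-- `ℤⁿ`-periodicity. -/
def ZPeriodic {n : ℕ} (f : (Fin n → ℝ) → ℝ) : Prop :=
  ∀ (k : Fin n → ℤ) (x : Fin n → ℝ), f (x + fun i => (k i : ℝ)) = f x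

/-- The unit cube `Q = [0,1]ⁿ`. -/
def unitCube (n : ℕ) : Set (Fin n → ℝ) := Set.Icc 0 1

/-- A classical solution `(u, m, H)` of the logarithmic ergodic MFG system
`-Δu + ½|∇u+P|² - v - log m = H`, `-Δm - div(m(∇u+P)) = 0`, `∫ u = 0`, `∫ m = 1`. -/
structure LogMFG {n : ℕ} (v : (Fin n → ℝ) → ℝ) (P : Fin n → ℝ)
    (u m : (Fin n → ℝ) → ℝ) (H : ℝ) : Prop where
  hu : ContDiff ℝ 2 u
  hm : ContDiff ℝ 2 m
  hup : ZPeriodic u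
  hmp : ZPeriodic m
  hmpos : ∀ x, 0 < m x
  hHJB : ∀ x, -lap u x + (∑ i, (pd i u x + P i) ^ 2) / 2 - v x - Real.log (m x) = H
  hFP : ∀ x, -lap m x - dvg (fun y j => m y * (pd j u y + P j)) x = 0
  humean : (∫ y in unitCube n, u y) = 0
  hmmean : (∫ y in unitCube n, m y) = 1

/-- A classical solution `(ũ, m̃, c)` of the system obtained linearizing the logarithmic
ergodic MFG system in the direction `e i`. -/
structure LinLogMFG {n : ℕ} (P : Fin n → ℝ)
    (u m : (Fin n → ℝ) → ℝ) (i : Fin n)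
    (ut mt : (Fin n → ℝ) → ℝ) (c : ℝ) : Prop where
  hut : ContDiff ℝ 2 ut
  hmt : ContDiff ℝ 2 mt
  hutp : ZPeriodic ut
  hmtp : ZPeriodic mt
  heq1 : ∀ x, -lap ut x + (∑ j, pd j ut x * (pd j u x + P j)) + (pd i u x + P i)
      - mt x / m x = c
  heq2 : ∀ x, -lap mt x - dvg (fun y j => (pd j u y + P j) * mt y) x
      = dvg (fun y j => m y * (pd j ut y + (Pi.single i 1 : Fin n → ℝ) j)) x
  hutmean : (∫ y in unitCube n, ut y) = 0
  hmtmean : (∫ y in unitCube n, mt y) = 0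

lemma pd_contDiff {n : ℕ} {f : (Fin n → ℝ) → ℝ} (hf : ContDiff ℝ 2 f) (j : Fin n) :
    ContDiff ℝ 1 (pd j f) := by
  have h1 : ContDiff ℝ 1 (fderiv ℝ f) := hf.fderiv_right (by norm_num)
  exact (ContinuousLinearMap.apply ℝ ℝ (Pi.single j 1)).contDiff.comp h1

lemma pd_periodic {n : ℕ} {f : (Fin n → ℝ) → ℝ} (hf : Differentiable ℝ f)
    (hp : ZPeriodic f) (j : Fin n) : ZPeriodic (pd j f) := by
  intro k x
  have hg : HasFDerivAt (fun y : Fin n → ℝ => y + fun i => (k i : ℝ))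
      (ContinuousLinearMap.id ℝ (Fin n → ℝ)) x := (hasFDerivAt_id x).add_const _
  have hcomp : HasFDerivAt (f ∘ fun y : Fin n → ℝ => y + fun i => (k i : ℝ))
      (fderiv ℝ f (x + fun i => (k i : ℝ))) x := by
    have := (hf _).hasFDerivAt.comp x hg
    simpa using this
  have hfun : (f ∘ fun y : Fin n → ℝ => y + fun i => (k i : ℝ)) = f := by
    funext y; exact hp k y
  rw [hfun] at hcomp
  simp only [pd, hcomp.fderiv]

lemma pd_mul {n : ℕ} {f g : (Fin n → ℝ) → ℝ} {x : Fin n → ℝ} (j : Fin n)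
    (hf : DifferentiableAt ℝ f x) (hg : DifferentiableAt ℝ g x) :
    pd j (fun y => f y * g y) x = pd j f x * g x + f x * pd j g x := by
  simp only [pd, fderiv_fun_mul hf hg, ContinuousLinearMap.add_apply,
    ContinuousLinearMap.smul_apply, smul_eq_mul]
  ring

lemma pd_add {n : ℕ} {f g : (Fin n → ℝ) → ℝ} {x : Fin n → ℝ} (j : Fin n)
    (hf : DifferentiableAt ℝ f x) (hg : DifferentiableAt ℝ g x) :
    pd j (fun y => f y + g y) x = pd j f x + pd j g x := by
  simp only [pd, fderiv_fun_add hf hg]; simp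

lemma pd_sub {n : ℕ} {f g : (Fin n → ℝ) → ℝ} {x : Fin n → ℝ} (j : Fin n)
    (hf : DifferentiableAt ℝ f x) (hg : DifferentiableAt ℝ g x) :
    pd j (fun y => f y - g y) x = pd j f x - pd j g x := by
  simp only [pd, fderiv_fun_sub hf hg]; simp

lemma pd_add_const {n : ℕ} {f : (Fin n → ℝ) → ℝ} {x : Fin n → ℝ} (j : Fin n) (a : ℝ)
    (_hf : DifferentiableAt ℝ f x) :
    pd j (fun y => f y + a) x = pd j f x := by
  simp only [pd, fderiv_add_const]

/-- Integral of the divergence of a `C¹` periodic vector field over the unit cube vanishes. -/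
lemma integral_dvg_zero {n : ℕ} (F : (Fin (n+1) → ℝ) → Fin (n+1) → ℝ)
    (hF : ∀ j, ContDiff ℝ 1 (fun y => F y j))
    (hFp : ∀ j, ZPeriodic (fun y => F y j)) :
    (∫ x in Set.Icc (0 : Fin (n+1) → ℝ) 1, dvg F x) = 0 := by
  have hFc : ContDiff ℝ 1 F := contDiff_pi.2 hF
  have hFd : Differentiable ℝ F := hFc.differentiable one_ne_zero
  have hcomp : ∀ (j : Fin (n+1)) (x : Fin (n+1) → ℝ),
      HasFDerivAt (fun y => F y j)
        ((ContinuousLinearMap.proj j).comp (fderiv ℝ F x)) x := fun j x => by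
    exact ((ContinuousLinearMap.proj j).hasFDerivAt.comp x (hFd x).hasFDerivAt :)
  have hdvg : ∀ x, dvg F x = ∑ j, fderiv ℝ F x (Pi.single j 1) j := by
    intro x
    refine Finset.sum_congr rfl fun j _ => ?_
    rw [pd, (hcomp j x).fderiv]; rfl
  have hcont : Continuous fun x => ∑ j, fderiv ℝ F x (Pi.single j 1) j := by
    refine continuous_finset_sum _ fun j _ => ?_
    exact (continuous_apply j).comp
      ((ContinuousLinearMap.apply ℝ (Fin (n+1) → ℝ) (Pi.single j 1)).continuous.comp
        (hFc.continuous_fderiv one_ne_zero))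
  have key := integral_divergence_of_hasFDerivAt_off_countable
    (a := (0 : Fin (n+1) → ℝ)) (b := 1) (fun i => zero_le_one) F (fun x => fderiv ℝ F x)
    ∅ Set.countable_empty hFc.continuous.continuousOn
    (fun x _ => (hFd x).hasFDerivAt)
    (hcont.continuousOn.integrableOn_compact isCompact_Icc)
  rw [setIntegral_congr_fun measurableSet_Icc (fun x _ => hdvg x), key]
  refine Finset.sum_eq_zero fun j _ => ?_
  have hper : ∀ y : Fin n → ℝ,
      F (j.insertNth ((1 : Fin (n+1) → ℝ) j) y) = F (j.insertNth ((0 : Fin (n+1) → ℝ) j) y) := by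
    intro y
    have h1 : j.insertNth (1:ℝ) y = j.insertNth (0:ℝ) y + fun l => ((Pi.single j 1 : Fin (n+1) → ℤ) l : ℝ) := by
      funext l
      rcases eq_or_ne l j with rfl | hne
      · simp
      · rcases Fin.exists_succAbove_eq hne with ⟨l', rfl⟩
        simp [Pi.single_apply, (Fin.succAbove_ne j l').symm, Fin.succAbove_ne j l']
    funext r
    have := hFp r (Pi.single j 1) (j.insertNth (0:ℝ) y)
    simp only [Pi.one_apply, Pi.zero_apply, h1]
    exact this
  rw [sub_eq_zero]
  exact setIntegral_congr_fun measurableSet_Icc fun y _ => congrFun (hper y) j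

/-- The MFG structure is preserved in the logarithmic case: the compatibility constant of
the linearized system equals the `i`-th component of the effective drift. -/
theorem lin_log_mfg_compatibility {n : ℕ} (hn : 1 ≤ n)
    (v : (Fin n → ℝ) → ℝ) (hv0 : ∀ x, 0 ≤ v x) (hvlip : ∃ K, LipschitzWith K v) (hvper : ZPeriodic v)
    (P : Fin n → ℝ) (u m : (Fin n → ℝ) → ℝ) (H : ℝ)
    (h : LogMFG v P u m H)
    (i : Fin n) (ut mt : (Fin n → ℝ) → ℝ) (c : ℝ)
    (hlin : LinLogMFG P u m i ut mt c)
    (b : Fin n → ℝ)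
    (hb : ∀ j, b j = ∫ y in unitCube n, (pd j u y + P j) * m y) :
    c = (∫ y in unitCube n, (pd i u y + P i) * m y) ∧ c = b i := by
  obtain ⟨k, rfl⟩ : ∃ k, n = k + 1 := ⟨n - 1, (Nat.succ_pred_eq_of_pos hn).symm⟩
  have hud : Differentiable ℝ u := h.hu.differentiable (by norm_num)
  have hmd : Differentiable ℝ m := h.hm.differentiable (by norm_num)
  have hutd : Differentiable ℝ ut := hlin.hut.differentiable (by norm_num)
  have hpdm : ∀ j, ContDiff ℝ 1 (pd j m) := pd_contDiff h.hm
  have hpdu : ∀ j, ContDiff ℝ 1 (pd j u) := pd_contDiff h.hu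
  have hpdut : ∀ j, ContDiff ℝ 1 (pd j ut) := pd_contDiff hlin.hut
  set F : (Fin (k+1) → ℝ) → Fin (k+1) → ℝ :=
    fun y j => ut y * (pd j m y + m y * (pd j u y + P j)) - m y * pd j ut y with hFdef
  have hFc : ∀ j, ContDiff ℝ 1 (fun y => F y j) := by
    intro j
    exact ((hlin.hut.of_le one_le_two).mul
        ((hpdm j).add ((h.hm.of_le one_le_two).mul ((hpdu j).add contDiff_const)))).sub
      ((h.hm.of_le one_le_two).mul (hpdut j))
  have hFp : ∀ j, ZPeriodic (fun y => F y j) := by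
    intro j k' x
    simp only [hFdef, hlin.hutp k' x, h.hmp k' x, pd_periodic hud h.hup j k' x,
      pd_periodic hmd h.hmp j k' x, pd_periodic hutd hlin.hutp j k' x]
  have hdiv : (∫ x in unitCube (k+1), dvg F x) = 0 := integral_dvg_zero F hFc hFp
  have hpt : ∀ x, dvg F x = c * m x - (pd i u x + P i) * m x + mt x := by
    intro x
    have hFP := h.hFP x
    have heq1 := hlin.heq1 x
    have hm0 : m x ≠ 0 := (h.hmpos x).ne'
    have hstep : dvg F x = ∑ j,
        (ut x * (pd j (pd j m) x + pd j (fun y => m y * (pd j u y + P j)) x)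
          + m x * (pd j ut x * (pd j u x + P j) - pd j (pd j ut) x)) := by
      rw [dvg]
      refine Finset.sum_congr rfl fun j _ => ?_
      have d_ut : DifferentiableAt ℝ ut x := hutd x
      have d_pdm : DifferentiableAt ℝ (pd j m) x := ((hpdm j).differentiable one_ne_zero) x
      have d_pdu : DifferentiableAt ℝ (pd j u) x := ((hpdu j).differentiable one_ne_zero) x
      have d_pdut : DifferentiableAt ℝ (pd j ut) x := ((hpdut j).differentiable one_ne_zero) x
      have d_up : DifferentiableAt ℝ (fun y => pd j u y + P j) x := d_pdu.add_const _
      have d_g : DifferentiableAt ℝ (fun y => m y * (pd j u y + P j)) x := (hmd x).mul d_up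
      have d_w : DifferentiableAt ℝ (fun y => pd j m y + m y * (pd j u y + P j)) x :=
        d_pdm.add d_g
      have e1 : pd j (fun y => F y j) x
          = pd j (fun y => ut y * (pd j m y + m y * (pd j u y + P j)) - m y * pd j ut y) x := rfl
      rw [e1, pd_sub j (d_ut.fun_mul d_w) ((hmd x).fun_mul d_pdut), pd_mul j d_ut d_w,
        pd_mul j (hmd x) d_pdut, pd_add j d_pdm d_g]
      ring
    have hsum : (∑ j : Fin (k+1),
        (ut x * (pd j (pd j m) x + pd j (fun y => m y * (pd j u y + P j)) x)
          + m x * (pd j ut x * (pd j u x + P j) - pd j (pd j ut) x)))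
        = ut x * (lap m x + dvg (fun y j => m y * (pd j u y + P j)) x)
          + m x * ((∑ j, pd j ut x * (pd j u x + P j)) - lap ut x) := by
      simp only [lap, dvg, Finset.mul_sum, ← Finset.sum_add_distrib, ← Finset.sum_sub_distrib,
        mul_add, mul_sub]
    have hFP' : lap m x + dvg (fun y j => m y * (pd j u y + P j)) x = 0 := by linarith
    have heq1' : (∑ j, pd j ut x * (pd j u x + P j)) - lap ut x
        = c - (pd i u x + P i) + mt x / m x := by linarith
    rw [hstep, hsum, hFP', heq1']
    field_simp
    ring
  have hIm : IntegrableOn m (unitCube (k+1)) :=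
    h.hm.continuous.continuousOn.integrableOn_compact isCompact_Icc
  have hIg : IntegrableOn (fun x => (pd i u x + P i) * m x) (unitCube (k+1)) :=
    (((hpdu i).continuous.add continuous_const).mul h.hm.continuous).continuousOn.integrableOn_compact
      isCompact_Icc
  have hImt : IntegrableOn mt (unitCube (k+1)) :=
    hlin.hmt.continuous.continuousOn.integrableOn_compact isCompact_Icc
  have hint : (∫ x in unitCube (k+1), dvg F x)
      = (∫ x in unitCube (k+1), (c * m x - (pd i u x + P i) * m x + mt x)) :=
    setIntegral_congr_fun measurableSet_Icc fun x _ => hpt x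
  rw [hdiv] at hint
  have hI1 : IntegrableOn (fun x => c * m x - (pd i u x + P i) * m x) (unitCube (k+1)) :=
    (hIm.const_mul c).sub hIg
  rw [integral_add hI1 hImt, integral_sub (hIm.const_mul c) hIg, integral_const_mul,
    h.hmmean, hlin.hmtmean] at hint
  have hc : c = ∫ y in unitCube (k+1), (pd i u y + P i) * m y := by linarith
  exact ⟨hc, by rw [hb i]; exact hc⟩
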